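/- Let α > 1 and t > 0. For every bounded continuous function y₀ : ℝ → ℂ whose restriction to (-1,1) extends to a continuous function y_{0,e} on the closure of Ω_α = {a + ib : |a| + α|b| < 1} holomorphic in Ω_α, the function y₂(t, a + ib) = ∫_{|x₀|<1} G(t, (a + ib) - x₀) y_{0,e}(x₀) dx₀ satisfies |y₂(t, a + ib)| ≤ 2 √((α² + 1)/(α² − 1)) · sup_{Ω_α} |y_{0,e}| for every a + ib in the closure of Ω_α, where G(t, z) = (4πt)^{-1/2} exp(-z²/(4t)). -/

import Mathlib

/-!
Replace `[-1, 1]` by the two other sides of the triangle with vertices `-1`, `1`, `z`. The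
integrand `w ↦ G(t, z - w) y₀ₑ(w)` is holomorphic on the convex open rhombus `Ω_α`, hence has a
primitive there; shrinking the triangle towards an interior point extends Cauchy's theorem to
vertices on the boundary. On the side from `z` to `v = ±1`, with `ζ = v - z` and
`w = z + τ ζ`, the kernel has modulus `exp (-τ² Re(ζ²) / 4t) / √(4πt)`, and the cone condition
`α |Im ζ| ≤ |Re ζ|` (from `|z.re| + α |z.im| ≤ 1`) gives `|ζ|² / Re(ζ²) ≤ (α² + 1) / (α² - 1)`.
The half-line Gaussian integral then bounds each side by `M / 2 · √((α² + 1) / (α² - 1))`.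
-/

open Real Set Filter Topology Complex

namespace Complex

noncomputable def segmentIntegral (f : ℂ → ℂ) (p q : ℂ) : ℂ :=
  (q - p) * ∫ τ in (0:ℝ)..1, f (p + τ * (q - p))

lemma segmentIntegral_ofReal_eq_intervalIntegral (f : ℂ → ℂ) (a b : ℝ) :
    segmentIntegral f a b = ∫ x in a..b, f x := by
  have := intervalIntegral.smul_integral_comp_mul_add (a := 0) (b := 1) (fun x : ℝ => f x)
    (b - a) a
  simp only [mul_zero, zero_add, mul_one, sub_add_cancel, real_smul] at this
  rw [segmentIntegral, ← this]
  push_cast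
  simp_rw [mul_comm _ ((b:ℂ) - a), add_comm _ (a:ℂ)]

lemma add_mul_sub_mem_segment {p q : ℂ} {τ : ℝ} (hτ : τ ∈ Icc (0:ℝ) 1) :
    p + τ * (q - p) ∈ segment ℝ p q := by
  rw [segment_eq_image']
  exact ⟨τ, hτ, by simp only [real_smul]⟩

lemma segmentIntegral_congr {f g : ℂ → ℂ} {p q : ℂ} (h : EqOn f g (segment ℝ p q)) :
    segmentIntegral f p q = segmentIntegral g p q := by
  unfold segmentIntegral
  congr 1
  refine intervalIntegral.integral_congr fun τ hτ => h (add_mul_sub_mem_segment ?_)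
  rwa [uIcc_of_le zero_le_one] at hτ

lemma segmentIntegral_eq_sub {f g : ℂ → ℂ} {p q : ℂ}
    (hg : ∀ w ∈ segment ℝ p q, HasDerivAt g (f w) w) (hf : ContinuousOn f (segment ℝ p q)) :
    segmentIntegral f p q = g q - g p := by
  have hγ : ∀ τ ∈ uIcc (0:ℝ) 1, p + τ * (q - p) ∈ segment ℝ p q := fun τ hτ =>
    add_mul_sub_mem_segment (by rwa [uIcc_of_le zero_le_one] at hτ)
  have hderiv : ∀ τ ∈ uIcc (0:ℝ) 1,
      HasDerivAt (fun τ : ℝ => g (p + τ * (q - p))) ((q - p) • f (p + τ * (q - p))) τ := by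
    intro τ hτ
    have hline : HasDerivAt (fun τ : ℝ => p + τ * (q - p)) (q - p) τ := by
      simpa using ((hasDerivAt_id τ).ofReal_comp.mul_const (q - p)).const_add p
    exact (hg _ (hγ τ hτ)).scomp τ hline
  have hint : IntervalIntegrable (fun τ : ℝ => (q - p) • f (p + τ * (q - p)))
      MeasureTheory.volume 0 1 :=
    ((hf.comp (by fun_prop) hγ).const_smul (q - p)).intervalIntegrable
  rw [segmentIntegral, ← smul_eq_mul, ← intervalIntegral.integral_smul,
    intervalIntegral.integral_eq_sub_of_hasDerivAt hderiv hint]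
  simp

lemma segmentIntegral_add_of_isOpen_convex {f : ℂ → ℂ} {U : Set ℂ} (hU : IsOpen U)
    (hUc : Convex ℝ U) (hf : DifferentiableOn ℂ f U) {p q r : ℂ} (hp : p ∈ U) (hq : q ∈ U)
    (hr : r ∈ U) :
    segmentIntegral f p q + segmentIntegral f q r = segmentIntegral f p r := by
  obtain ⟨g, hg⟩ := hUc.exists_forall_hasDerivWithinAt hf
  have hg' : ∀ w ∈ U, HasDerivAt g (f w) w := fun w hw => (hg w hw).hasDerivAt (hU.mem_nhds hw)
  have key : ∀ {a b}, a ∈ U → b ∈ U → segmentIntegral f a b = g b - g a := fun ha hb =>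
    segmentIntegral_eq_sub (fun w hw => hg' w (hUc.segment_subset ha hb hw))
      (hf.continuousOn.mono (hUc.segment_subset ha hb))
  rw [key hp hq, key hq hr, key hp hr]
  ring

lemma continuous_segmentIntegral {f : ℂ → ℂ} (hf : Continuous f) :
    Continuous fun pq : ℂ × ℂ => segmentIntegral f pq.1 pq.2 := by
  unfold segmentIntegral
  fun_prop

lemma segmentIntegral_add_of_closure {f : ℂ → ℂ} {U : Set ℂ} (hU : IsOpen U)
    (hUc : Convex ℝ U) (hf : DifferentiableOn ℂ f U) (hfc : ContinuousOn f (closure U))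
    {p q r : ℂ} (hp : p ∈ closure U) (hq : q ∈ closure U) (hr : r ∈ closure U) :
    segmentIntegral f p q + segmentIntegral f q r = segmentIntegral f p r := by
  obtain ⟨c, hc⟩ : U.Nonempty := closure_nonempty_iff.mp ⟨p, hp⟩
  -- Tietze: extend `f` to `ℂ`, so that segment integrals depend continuously on the endpoints
  obtain ⟨F, hF⟩ := ContinuousMap.exists_restrict_eq isClosed_closure ⟨_, hfc.domRestrict⟩
  have hFf : EqOn F f (closure U) := fun w hw => congr($hF ⟨w, hw⟩)
  -- shrink the three vertices towards `c`, so that they lie in `U` for `s < 1`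
  let shrink : ℝ → ℂ → ℂ := fun s w => c + s * (w - c)
  have hshrink : ∀ s ∈ Ico (0:ℝ) 1, ∀ w ∈ closure U, shrink s w ∈ U := by
    intro s hs w hw
    have := hUc.combo_interior_closure_mem_interior (hU.interior_eq ▸ hc) hw
      (sub_pos.mpr hs.2) hs.1 (sub_add_cancel 1 s)
    rw [hU.interior_eq] at this
    convert this using 1
    simp only [shrink, real_smul]; push_cast; ring
  have hFU : DifferentiableOn ℂ F U := hf.congr fun w hw => hFf (subset_closure hw)
  have hcont : ∀ a b : ℂ, Continuous fun s : ℝ => segmentIntegral F (shrink s a) (shrink s b) :=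
    fun a b => (continuous_segmentIntegral F.continuous).comp
      (f := fun s : ℝ => (shrink s a, shrink s b)) (by fun_prop)
  have hlim := EqOn.of_subset_closure (s := Ico (0:ℝ) 1) (t := Icc 0 1)
    (f := fun s => segmentIntegral F (shrink s p) (shrink s q) +
      segmentIntegral F (shrink s q) (shrink s r))
    (g := fun s => segmentIntegral F (shrink s p) (shrink s r))
    (fun s hs => segmentIntegral_add_of_isOpen_convex hU hUc hFU (hshrink s hs p hp)
      (hshrink s hs q hq) (hshrink s hs r hr))
    ((hcont p q).add (hcont q r)).continuousOn (hcont p r).continuousOn Ico_subset_Icc_self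
    (by rw [closure_Ico zero_ne_one])
    (right_mem_Icc.mpr zero_le_one)
  have hconv := hUc.closure
  simp only [shrink, ofReal_one, one_mul, add_sub_cancel] at hlim
  rwa [segmentIntegral_congr (hFf.mono (hconv.segment_subset hp hq)),
    segmentIntegral_congr (hFf.mono (hconv.segment_subset hq hr)),
    segmentIntegral_congr (hFf.mono (hconv.segment_subset hp hr))] at hlim

noncomputable def heatKernel (t : ℝ) (w : ℂ) : ℂ :=
  (1 / Real.sqrt (4 * π * t) : ℂ) * Complex.exp (-w ^ 2 / (4 * t))

lemma heatKernel_neg (t : ℝ) (w : ℂ) : heatKernel t (-w) = heatKernel t w := by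
  simp [heatKernel]

lemma norm_heatKernel (t : ℝ) (w : ℂ) :
    ‖heatKernel t w‖ = Real.exp (-(w ^ 2).re / (4 * t)) / Real.sqrt (4 * π * t) := by
  have h4t : (4 * t : ℂ) = ((4 * t : ℝ) : ℂ) := by push_cast; ring
  rw [heatKernel, norm_mul, norm_exp, h4t, div_ofReal_re, neg_re, norm_div, norm_one, norm_real,
    Real.norm_of_nonneg (Real.sqrt_nonneg _)]
  ring

lemma integral_exp_neg_mul_sq_le {b : ℝ} (hb : 0 < b) :
    ∫ τ in (0:ℝ)..1, Real.exp (-b * τ ^ 2) ≤ Real.sqrt (π / b) / 2 := by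
  rw [← integral_gaussian_Ioi b, intervalIntegral.integral_of_le zero_le_one]
  exact MeasureTheory.setIntegral_mono_set (integrable_exp_neg_mul_sq hb).integrableOn
    (.of_forall fun _ => (Real.exp_pos _).le) (.of_forall fun _ hx => hx.1)

lemma norm_mul_integral_heatKernel_le {t M : ℝ} (ht : 0 < t) {ζ : ℂ} (hζ : 0 < (ζ ^ 2).re)
    {h : ℝ → ℂ} (hh : ∀ τ ∈ Icc (0:ℝ) 1, ‖h τ‖ ≤ M) :
    ‖ζ * ∫ τ in (0:ℝ)..1, heatKernel t (τ * ζ) * h τ‖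
      ≤ M / 2 * (‖ζ‖ / Real.sqrt (ζ ^ 2).re) := by
  set ρ := (ζ ^ 2).re
  have hM : 0 ≤ M := (norm_nonneg _).trans (hh 0 (left_mem_Icc.mpr zero_le_one))
  have hb : 0 < ρ / (4 * t) := by positivity
  have hpt : ∀ τ ∈ Ioc (0:ℝ) 1, ‖heatKernel t (τ * ζ) * h τ‖
      ≤ M / Real.sqrt (4 * π * t) * Real.exp (-(ρ / (4 * t)) * τ ^ 2) := by
    intro τ hτ
    have hre : (((τ : ℂ) * ζ) ^ 2).re = τ ^ 2 * ρ := by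
      rw [mul_pow, ← ofReal_pow, re_ofReal_mul]
    rw [norm_mul, norm_heatKernel, hre,
      show -(τ ^ 2 * ρ) / (4 * t) = -(ρ / (4 * t)) * τ ^ 2 by ring]
    exact (mul_le_mul_of_nonneg_left (hh τ (Ioc_subset_Icc_self hτ)) (by positivity)).trans_eq
      (by ring)
  calc ‖ζ * ∫ τ in (0:ℝ)..1, heatKernel t (τ * ζ) * h τ‖
      ≤ ‖ζ‖ * ∫ τ in (0:ℝ)..1,
          M / Real.sqrt (4 * π * t) * Real.exp (-(ρ / (4 * t)) * τ ^ 2) := by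
        rw [norm_mul]
        gcongr
        exact intervalIntegral.norm_integral_le_of_norm_le zero_le_one (.of_forall hpt)
          ((by fun_prop : Continuous _).intervalIntegrable _ _)
    _ ≤ ‖ζ‖ * (M / Real.sqrt (4 * π * t) * (Real.sqrt (π / (ρ / (4 * t))) / 2)) := by
        rw [intervalIntegral.integral_const_mul]
        gcongr
        exact integral_exp_neg_mul_sq_le hb
    _ = M / 2 * (‖ζ‖ / Real.sqrt ρ) := by
        have hπt : 0 < Real.sqrt (4 * π * t) := by positivity
        rw [show π / (ρ / (4 * t)) = 4 * π * t / ρ by field_simp, Real.sqrt_div' _ hζ.le]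
        field_simp

lemma re_sq_pos_of_mul_abs_im_le {α : ℝ} (hα : 1 < α) {ζ : ℂ} (hζ : α * |ζ.im| ≤ |ζ.re|)
    (hζ0 : ζ ≠ 0) : 0 < (ζ ^ 2).re := by
  have him_lt : |ζ.im| < |ζ.re| := by
    by_cases him : ζ.im = 0
    · rw [him, abs_zero, abs_pos]
      exact fun hre => hζ0 (Complex.ext hre him)
    · nlinarith [abs_pos.mpr him]
  rw [sq, mul_re]
  nlinarith [mul_self_lt_mul_self (abs_nonneg _) him_lt, abs_mul_abs_self ζ.re,
    abs_mul_abs_self ζ.im]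

lemma norm_div_sqrt_re_sq_le {α : ℝ} (hα : 1 < α) {ζ : ℂ} (hζ : α * |ζ.im| ≤ |ζ.re|)
    (hζ0 : ζ ≠ 0) :
    ‖ζ‖ / Real.sqrt (ζ ^ 2).re ≤ Real.sqrt ((α ^ 2 + 1) / (α ^ 2 - 1)) := by
  have hρ := re_sq_pos_of_mul_abs_im_le hα hζ hζ0
  rw [norm_def, ← Real.sqrt_div (normSq_nonneg ζ)]
  apply Real.sqrt_le_sqrt
  rw [div_le_div_iff₀ hρ (by nlinarith), normSq_apply, sq ζ, mul_re]
  have hα0 : 0 ≤ α := by linarith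
  nlinarith [mul_self_le_mul_self (by positivity) hζ, abs_mul_abs_self ζ.re,
    abs_mul_abs_self ζ.im]

lemma norm_segmentIntegral_heatKernel_le {α t M : ℝ} (hα : 1 < α) (ht : 0 < t) {z : ℂ}
    (hz : |z.re| + α * |z.im| ≤ 1) {v : ℝ} (hv : |v| = 1) {g : ℂ → ℂ}
    (hg : ∀ w ∈ segment ℝ z v, ‖g w‖ ≤ M) :
    ‖segmentIntegral (fun w => heatKernel t (z - w) * g w) z v‖
      ≤ M / 2 * Real.sqrt ((α ^ 2 + 1) / (α ^ 2 - 1)) := by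
  have hM : 0 ≤ M := (norm_nonneg _).trans (hg z (left_mem_segment ℝ z v))
  set ζ : ℂ := v - z with hζdef
  by_cases hζ0 : ζ = 0
  · simp only [segmentIntegral, ← hζdef, hζ0, zero_mul, norm_zero]
    positivity
  have hcone : α * |ζ.im| ≤ |ζ.re| := by
    have := abs_sub_abs_le_abs_sub v z.re
    simp only [hζdef, sub_re, sub_im, ofReal_re, ofReal_im, zero_sub, abs_neg]
    linarith
  have hint : ∀ τ : ℝ, heatKernel t (z - (z + τ * ζ)) * g (z + τ * ζ)
      = heatKernel t (τ * ζ) * g (z + τ * ζ) := fun τ => by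
    rw [sub_add_cancel_left, heatKernel_neg]
  simp only [segmentIntegral, ← hζdef, hint]
  exact (norm_mul_integral_heatKernel_le ht (re_sq_pos_of_mul_abs_im_le hα hcone hζ0)
    (fun τ hτ => hg _ (add_mul_sub_mem_segment hτ))).trans
    (mul_le_mul_of_nonneg_left (norm_div_sqrt_re_sq_le hα hcone hζ0) (by positivity))

def rhombus (α : ℝ) : Set ℂ := {z : ℂ | |z.re| + α * |z.im| < 1}

lemma isOpen_rhombus (α : ℝ) : IsOpen (rhombus α) :=
  isOpen_lt (by fun_prop) continuous_const

lemma convex_rhombus {α : ℝ} (hα : 0 ≤ α) : Convex ℝ (rhombus α) := by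
  have hre : ConvexOn ℝ univ fun z : ℂ => |z.re| := by
    simpa [Function.comp_def] using (convexOn_norm convex_univ).comp_linearMap reLm
  have him : ConvexOn ℝ univ fun z : ℂ => |z.im| := by
    simpa [Function.comp_def] using (convexOn_norm convex_univ).comp_linearMap imLm
  simpa [rhombus] using (hre.add (him.smul hα)).convex_lt 1

lemma closure_rhombus_subset (α : ℝ) :
    closure (rhombus α) ⊆ {z : ℂ | |z.re| + α * |z.im| ≤ 1} :=
  closure_lt_subset_le (by fun_prop) continuous_const

lemma ofReal_mem_closure_rhombus (α : ℝ) {x : ℝ} (hx : |x| ≤ 1) :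
    (x : ℂ) ∈ closure (rhombus α) := by
  have hlim : Tendsto (fun s : ℝ => ((s * x : ℝ) : ℂ)) (𝓝[<] 1) (𝓝 x) :=
    tendsto_nhdsWithin_of_tendsto_nhds
      ((by fun_prop : Continuous fun s : ℝ => ((s * x : ℝ) : ℂ)).tendsto' 1 x (by simp))
  refine mem_closure_of_tendsto hlim ?_
  filter_upwards [Ioo_mem_nhdsLT (show (0:ℝ) < 1 by norm_num)] with s hs
  simp only [rhombus, mem_ofPred_eq, ofReal_re, ofReal_im, abs_zero, mul_zero, add_zero, abs_mul,
    abs_of_pos hs.1]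
  nlinarith [hs.1, hs.2]

end Complex

theorem stmt_18_general (α : ℝ) (hα : 1 < α) (t : ℝ) (ht : 0 < t)
    (y₀e : ℂ → ℂ)
    (hcont : ContinuousOn y₀e (closure {z : ℂ | |z.re| + α * |z.im| < 1}))
    (hhol : DifferentiableOn ℂ y₀e {z : ℂ | |z.re| + α * |z.im| < 1})
    (M : ℝ) (hM : ∀ w ∈ {z : ℂ | |z.re| + α * |z.im| < 1}, ‖y₀e w‖ ≤ M) :
    ∀ z ∈ closure {z : ℂ | |z.re| + α * |z.im| < 1},
      ‖(∫ x₀ in (-1:ℝ)..1,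
          (1 / Real.sqrt (4 * π * t) : ℂ) * Complex.exp (-(z - x₀) ^ 2 / (4 * t)) * y₀e x₀)‖
        ≤ 2 * Real.sqrt ((α ^ 2 + 1) / (α ^ 2 - 1)) * M := by
  intro z hz
  set f : ℂ → ℂ := fun w => heatKernel t (z - w) * y₀e w
  have hconv : Convex ℝ (rhombus α) := convex_rhombus (by linarith)
  have hf : DifferentiableOn ℂ f (rhombus α) :=
    DifferentiableOn.mul (by unfold heatKernel; fun_prop) hhol
  have hfc : ContinuousOn f (closure (rhombus α)) :=
    ContinuousOn.mul (by unfold heatKernel; fun_prop) hcont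
  have hMcl : ∀ w ∈ closure (rhombus α), ‖y₀e w‖ ≤ M := fun w hw =>
    ContinuousWithinAt.closure_le hw ((hcont w hw).mono subset_closure).norm
      continuousWithinAt_const hM
  have hsplit := segmentIntegral_add_of_closure (isOpen_rhombus α) hconv hf hfc hz
    (ofReal_mem_closure_rhombus α (x := -1) (by norm_num))
    (ofReal_mem_closure_rhombus α (x := 1) (by norm_num))
  have hside : ∀ v : ℝ, |v| = 1 →
      ‖segmentIntegral f z v‖ ≤ M / 2 * Real.sqrt ((α ^ 2 + 1) / (α ^ 2 - 1)) := fun v hv =>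
    norm_segmentIntegral_heatKernel_le hα ht (closure_rhombus_subset α hz) hv fun w hw =>
      hMcl w (hconv.closure.segment_subset hz (ofReal_mem_closure_rhombus α hv.le) hw)
  have hM0 : 0 ≤ M * Real.sqrt ((α ^ 2 + 1) / (α ^ 2 - 1)) :=
    mul_nonneg ((norm_nonneg _).trans (hMcl z hz)) (Real.sqrt_nonneg _)
  calc _ = ‖segmentIntegral f z (1:ℝ) - segmentIntegral f z (-1:ℝ)‖ := by
        rw [← hsplit, add_sub_cancel_left, segmentIntegral_ofReal_eq_intervalIntegral]
        rfl
    _ ≤ ‖segmentIntegral f z (1:ℝ)‖ + ‖segmentIntegral f z (-1:ℝ)‖ := norm_sub_le _ _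
    _ ≤ 2 * Real.sqrt ((α ^ 2 + 1) / (α ^ 2 - 1)) * M := by
        linarith [hside 1 (by norm_num), hside (-1) (by norm_num)]

theorem stmt_18 (α : ℝ) (hα : 1 < α) (t : ℝ) (ht : 0 < t)
    (y₀ : ℝ → ℂ) (hy₀cont : Continuous y₀) (hy₀bdd : ∃ K, ∀ x, ‖y₀ x‖ ≤ K)
    (y₀e : ℂ → ℂ)
    (hcont : ContinuousOn y₀e (closure {z : ℂ | |z.re| + α * |z.im| < 1}))
    (hhol : DifferentiableOn ℂ y₀e {z : ℂ | |z.re| + α * |z.im| < 1})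
    (hagree : ∀ x ∈ Set.Ioo (-1:ℝ) 1, y₀e x = y₀ x)
    (M : ℝ) (hM : ∀ w ∈ {z : ℂ | |z.re| + α * |z.im| < 1}, ‖y₀e w‖ ≤ M) :
    ∀ z ∈ closure {z : ℂ | |z.re| + α * |z.im| < 1},
      ‖(∫ x₀ in (-1:ℝ)..1,
          (1 / Real.sqrt (4 * π * t) : ℂ) * Complex.exp (-(z - x₀) ^ 2 / (4 * t)) * y₀e x₀)‖
        ≤ 2 * Real.sqrt ((α ^ 2 + 1) / (α ^ 2 - 1)) * M :=
  stmt_18_general α hα t ht y₀e hcont hhol M hM
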